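/- Let R be a commutative ring, n ≥ 2, and c ∈ R. The n-ary semigroup (R,p) with p(x₁,...,xₙ) = c + Σ x_i is derived from a binary semigroup if and only if c = (n-1)c₀ for some c₀ ∈ R; in that case p(x₁,...,xₙ) = x₁ ∘ ⋯ ∘ xₙ for x ∘ y = x + y + c₀. -/

import Mathlib

/-!
If `x ∘ y = x + y + c₀`, folding `∘` over `n` arguments adds `(n - 1) c₀` to their sum, which
gives one direction. Conversely, let `∘` be associative with `x₁ ∘ ⋯ ∘ xₙ = c + ∑ xᵢ`. Testing on
`(a, 0, …, 0, b)` gives `g a ∘ b = c + a + b` with `g a = a ∘ 0 ∘ ⋯ ∘ 0`; associativity then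
forces `t ∘ z = t + (0 ∘ z)`, so folding `∘` over `(0, …, 0)` gives `c = (n - 1) (0 ∘ 0)`.
-/

section AddConst

variable {M : Type*} [AddCommMonoid M]

theorem List.foldl_add_add_const (c₀ : M) (l : List M) (a : M) :
    l.foldl (fun u v => u + v + c₀) a = a + l.sum + l.length • c₀ := by
  induction l generalizing a with
  | nil => simp
  | cons hd tl ih =>
    rw [List.foldl_cons, ih, List.sum_cons, List.length_cons, succ_nsmul]
    abel

theorem foldl_tail_ofFn_add_add_const (c₀ : M) {m : ℕ} (x : Fin (m + 1) → M) :
    (List.ofFn x).tail.foldl (fun u v => u + v + c₀) (x 0) = ∑ i, x i + m • c₀ := by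
  rw [List.ofFn_succ, List.tail_cons, List.foldl_add_add_const, List.sum_ofFn,
    List.length_ofFn, Fin.sum_univ_succ, add_assoc]

end AddConst

section Translation

variable {M : Type*} [AddCommGroup M] {op : M → M → M}

theorem op_foldl_replicate_zero_of_forall_foldl_eq {c : M} {m : ℕ}
    (hfold : ∀ x : Fin (m + 2) → M, c + ∑ i, x i = (List.ofFn x).tail.foldl op (x 0))
    (a b : M) : op ((List.replicate m 0).foldl op a) b = c + a + b := by
  have h := hfold (Fin.cons a (Fin.snoc (fun _ : Fin m => 0) b))
  rw [List.ofFn_succ, List.ofFn_succ', Fin.sum_cons, Fin.sum_snoc] at h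
  simpa [List.foldl_append, add_assoc] using h.symm

theorem op_eq_add_op_zero_of_op_apply_eq (hop : ∀ x y z, op (op x y) z = op x (op y z))
    {c : M} {g : M → M} (hg : ∀ a b, op (g a) b = c + a + b) (t z : M) :
    op t z = t + op 0 z := by
  have h := hop (g (t - c)) 0 z
  rwa [hg, hg, add_zero, add_sub_cancel] at h

theorem foldl_replicate_zero_of_op_eq_add (hop : ∀ t z, op t z = t + op 0 z) (k : ℕ) (a : M) :
    (List.replicate k 0).foldl op a = a + k • op 0 0 := by
  induction k generalizing a with
  | zero => simp
  | succ k ih => rw [List.replicate_succ, List.foldl_cons, ih, hop a 0, succ_nsmul', add_assoc]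

theorem eq_succ_nsmul_op_zero_of_forall_foldl_eq (hop : ∀ x y z, op (op x y) z = op x (op y z))
    {c : M} {m : ℕ}
    (hfold : ∀ x : Fin (m + 2) → M, c + ∑ i, x i = (List.ofFn x).tail.foldl op (x 0)) :
    c = (m + 1) • op 0 0 := by
  have hg := op_foldl_replicate_zero_of_forall_foldl_eq hfold
  have htrans := op_eq_add_op_zero_of_op_apply_eq hop hg
  have h := hg 0 0
  rw [foldl_replicate_zero_of_op_eq_add htrans, htrans] at h
  rw [zero_add, add_zero, add_zero] at h
  rw [succ_nsmul, h]

end Translation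

theorem stmt_19 {R : Type*} [CommRing R] (n : ℕ) (hn : 2 ≤ n) (c : R) :
    ((∃ op : R → R → R,
        (∀ x y z : R, op (op x y) z = op x (op y z)) ∧
        ∀ x : Fin n → R,
          c + ∑ i, x i = (List.ofFn x).tail.foldl op (x ⟨0, by omega⟩)) ↔
      ∃ c₀ : R, c = ((n : R) - 1) * c₀) ∧
    ∀ c₀ : R, c = ((n : R) - 1) * c₀ →
      ∀ x : Fin n → R,
        c + ∑ i, x i =
          (List.ofFn x).tail.foldl (fun u v => u + v + c₀) (x ⟨0, by omega⟩) := by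
  obtain ⟨m, rfl⟩ : ∃ m, n = m + 2 := ⟨n - 2, by omega⟩
  have hcast : ((m + 2 : ℕ) : R) - 1 = ((m + 1 : ℕ) : R) := by push_cast; ring
  have derived : ∀ c₀ : R, c = ((m + 2 : ℕ) - 1 : R) * c₀ → ∀ x : Fin (m + 2) → R,
      c + ∑ i, x i = (List.ofFn x).tail.foldl (fun u v => u + v + c₀) (x 0) := by
    intro c₀ hc x
    rw [foldl_tail_ofFn_add_add_const, hc, hcast, ← nsmul_eq_mul]
    abel
  refine ⟨⟨fun ⟨op, hop, hfold⟩ => ⟨op 0 0, ?_⟩,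
    fun ⟨c₀, hc⟩ => ⟨_, fun _ _ _ => by ring, derived c₀ hc⟩⟩, derived⟩
  rw [hcast, ← nsmul_eq_mul]
  exact eq_succ_nsmul_op_zero_of_forall_foldl_eq hop hfold
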